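/- With p(x) = (1/M) Σ_{m=0}^{M-1} (m!/(m+ν)!) [L_m^ν(x)]² x^ν e^{-x} on (0,∞), ν = N−M ≥ 0, the second moment ∫₀^∞ x² p(x) dx equals N(N+M). -/

import Mathlib

open MeasureTheory Real

/-- Associated Laguerre polynomial `L_n^ν(x) = ∑_{k=0}^n C(n+ν, n-k) (-x)^k / k!`. -/
noncomputable def assocLaguerre (n ν : ℕ) (x : ℝ) : ℝ :=
  ∑ k ∈ Finset.range (n + 1), ((n + ν).choose (n - k) : ℝ) * (-x) ^ k / (Nat.factorial k)

/-- Marginal density of an unordered eigenvalue of a complex Wishart matrix. -/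
noncomputable def eigenDensity (M ν : ℕ) (x : ℝ) : ℝ :=
  (1 / M) * ∑ m ∈ Finset.range M,
    ((Nat.factorial m : ℝ) / (Nat.factorial (m + ν))) *
      (assocLaguerre m ν x) ^ 2 * x ^ ν * Real.exp (-x)

/-
Expanding `L_m^ν` and integrating monomials against `e^{-x}` turns every integral into a sum of
factorials. The moment `∫₀^∞ x^(ν+s) L_m^ν(x) e^{-x} dx` equals `(-1)^m (ν+s)! C(s, m)` by the
Chu–Vandermonde identity with a negated upper index; it vanishes for `s < m`, which is the
orthogonality of `L_m^ν`. Hence in `∫ x^(ν+2) (L_m^ν)² e^{-x}` only the three top coefficients of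
`L_m^ν` survive, giving `(m+ν)!/m! · (6m² + 6m(ν+1) + (ν+1)(ν+2))`, i.e. the three-term value
`(m+1)(m+ν+1) + (2m+ν+1)² + m(m+ν)` times `‖L_m^ν‖²`. Summing over `m < M` gives
`M (M+ν)(2M+ν) = M · N(N+M)`.
-/

open Finset Set Nat

theorem integrableOn_pow_mul_exp_neg (n : ℕ) :
    IntegrableOn (fun x : ℝ => x ^ n * exp (-x)) (Ioi 0) :=
  (GammaIntegral_convergent (s := n + 1) (by positivity)).congr_fun
    (fun x _ => by simp [mul_comm]) measurableSet_Ioi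

theorem integral_pow_mul_exp_neg (n : ℕ) :
    ∫ x in Ioi (0 : ℝ), x ^ n * exp (-x) = n ! := by
  rw [← Gamma_nat_eq_factorial, Gamma_eq_integral (by positivity)]
  simp [mul_comm]

theorem integrableOn_sum_pow_mul_exp_neg {ι : Type*} (s : Finset ι) (c : ι → ℝ) (e : ι → ℕ) :
    IntegrableOn (fun x => ∑ i ∈ s, c i * (x ^ e i * exp (-x))) (Ioi 0) :=
  integrable_finsetSum _ fun i _ => (integrableOn_pow_mul_exp_neg (e i)).const_mul (c i)

theorem integral_sum_pow_mul_exp_neg {ι : Type*} (s : Finset ι) (c : ι → ℝ) (e : ι → ℕ) :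
    ∫ x in Ioi (0 : ℝ), ∑ i ∈ s, c i * (x ^ e i * exp (-x)) = ∑ i ∈ s, c i * (e i)! := by
  rw [integral_finsetSum _ fun i _ => (integrableOn_pow_mul_exp_neg (e i)).const_mul (c i)]
  simp only [integral_const_mul, integral_pow_mul_exp_neg]

theorem sum_neg_one_pow_mul_choose_mul_add_choose (a b n : ℕ) (h : a ≤ b + n) :
    ∑ k ∈ range (n + 1), (-1 : ℤ) ^ k * a.choose (n - k) * (b + k).choose k
      = (-1) ^ n * (b + n - a).choose n := by
  have choose_neg (r : ℤ) (k : ℕ) : Ring.choose (-r) k = (-1) ^ k * Ring.choose (r + k - 1) k := by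
    simp [Ring.choose_neg, Units.smul_def, Int.negOnePow_def]
  have hv := Ring.add_choose_eq n (Commute.all (-((b : ℤ) + 1)) a)
  rw [Finset.Nat.sum_antidiagonal_eq_sum_range_succ
    (fun i j => Ring.choose (-((b : ℤ) + 1)) i * Ring.choose (a : ℤ) j),
    show -((b : ℤ) + 1) + a = -((b : ℤ) + 1 - a) by ring, choose_neg,
    show (b : ℤ) + 1 - a + n - 1 = ((b + n - a : ℕ) : ℤ) by omega, Ring.choose_natCast] at hv
  rw [hv]
  refine sum_congr rfl fun k _ => ?_
  rw [choose_neg, show (b : ℤ) + 1 + k - 1 = ((b + k : ℕ) : ℤ) by push_cast; ring,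
    Ring.choose_natCast, Ring.choose_natCast]
  ring

noncomputable def laguerreCoeff (m ν k : ℕ) : ℝ := (-1) ^ k * (m + ν).choose (m - k) / k !

theorem assocLaguerre_eq_sum (m ν : ℕ) (x : ℝ) :
    assocLaguerre m ν x = ∑ k ∈ range (m + 1), laguerreCoeff m ν k * x ^ k := by
  refine sum_congr rfl fun k _ => ?_
  rw [laguerreCoeff, neg_pow]
  ring

theorem sum_laguerreCoeff_mul_factorial (m ν s : ℕ) :
    ∑ k ∈ range (m + 1), laguerreCoeff m ν k * (ν + s + k)! = (-1) ^ m * (ν + s)! * s.choose m := by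
  have h := sum_neg_one_pow_mul_choose_mul_add_choose (m + ν) (ν + s) m (by omega)
  rw [show ν + s + m - (m + ν) = s by omega] at h
  have hfac (k : ℕ) : ((ν + s + k)! : ℝ) / k ! = (ν + s + k).choose k * (ν + s)! := by
    rw [← Nat.add_choose_mul_factorial_mul_factorial (ν + s) k]
    push_cast
    field_simp
  calc ∑ k ∈ range (m + 1), laguerreCoeff m ν k * (ν + s + k)!
      = ((∑ k ∈ range (m + 1), (-1 : ℤ) ^ k * (m + ν).choose (m - k) * (ν + s + k).choose k : ℤ)
          : ℝ) * (ν + s)! := by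
        push_cast
        rw [sum_mul]
        refine sum_congr rfl fun k _ => ?_
        rw [laguerreCoeff, mul_comm, ← mul_div_assoc, mul_div_right_comm, hfac]
        ring
    _ = (-1) ^ m * (ν + s)! * s.choose m := by
        rw [h]
        push_cast
        ring

theorem sum_laguerreCoeff_mul_factorial_mul_choose (m ν : ℕ) :
    ∑ j ∈ range (m + 1), laguerreCoeff m ν j * ((-1) ^ m * (ν + (j + 2))! * (j + 2).choose m)
      = (m + ν)! / m ! * (6 * m ^ 2 + 6 * m * (ν + 1) + (ν + 1) * (ν + 2)) := by
  match m with
  | 0 =>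
    simp [laguerreCoeff, Nat.factorial_succ]
    field_simp
    ring
  | 1 =>
    simp [sum_range_succ, laguerreCoeff, Nat.factorial_succ, add_comm 1 ν]
    field_simp
    ring
  | c + 2 =>
    rw [sum_range_succ, sum_range_succ, sum_range_succ, sum_eq_zero fun j hj => by
      rw [Nat.choose_eq_zero_of_lt (by simp at hj; omega)]; simp]
    rw [show ν + (c + 2) = c + 2 + ν by ring, show ν + (c + 1 + 2) = c + 2 + ν + 1 by ring,
      show ν + (c + 2 + 2) = c + 2 + ν + 1 + 1 by ring, Nat.choose_symm_add]
    simp [laguerreCoeff, Nat.factorial_succ, Nat.choose_succ_self_right, Nat.cast_choose_two,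
      pow_succ]
    rcases neg_one_pow_eq_or ℝ c with h | h <;> rw [h] <;> field_simp <;> ring

theorem pow_mul_sq_assocLaguerre_mul_exp_neg (m ν n : ℕ) (x : ℝ) :
    x ^ n * assocLaguerre m ν x ^ 2 * exp (-x)
      = ∑ p ∈ range (m + 1) ×ˢ range (m + 1),
          laguerreCoeff m ν p.1 * laguerreCoeff m ν p.2 * (x ^ (n + p.1 + p.2) * exp (-x)) := by
  rw [sum_product, sq, assocLaguerre_eq_sum, sum_mul_sum, mul_sum, sum_mul]
  refine sum_congr rfl fun j _ => ?_
  rw [mul_sum, sum_mul]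
  refine sum_congr rfl fun k _ => ?_
  ring

theorem integrableOn_pow_mul_sq_assocLaguerre_mul_exp_neg (m ν n : ℕ) :
    IntegrableOn (fun x => x ^ n * assocLaguerre m ν x ^ 2 * exp (-x)) (Ioi 0) := by
  simp only [pow_mul_sq_assocLaguerre_mul_exp_neg]
  exact integrableOn_sum_pow_mul_exp_neg _ _ _

theorem integral_pow_mul_sq_assocLaguerre_mul_exp_neg (m ν : ℕ) :
    ∫ x in Ioi (0 : ℝ), x ^ (ν + 2) * assocLaguerre m ν x ^ 2 * exp (-x)
      = (m + ν)! / m ! * (6 * m ^ 2 + 6 * m * (ν + 1) + (ν + 1) * (ν + 2)) := by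
  simp only [pow_mul_sq_assocLaguerre_mul_exp_neg]
  rw [integral_sum_pow_mul_exp_neg, sum_product, ← sum_laguerreCoeff_mul_factorial_mul_choose]
  refine sum_congr rfl fun j _ => ?_
  rw [← sum_laguerreCoeff_mul_factorial, mul_sum]
  refine sum_congr rfl fun k _ => ?_
  rw [show ν + 2 + j + k = ν + (j + 2) + k by ring]
  ring

theorem sum_range_six_mul_sq_add (M ν : ℕ) :
    ∑ m ∈ range M, (6 * (m : ℝ) ^ 2 + 6 * m * (ν + 1) + (ν + 1) * (ν + 2))
      = (M : ℝ) * (M + ν) * (2 * M + ν) := by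
  induction M with
  | zero => simp
  | succ M ih =>
    rw [sum_range_succ, ih]
    push_cast
    ring

theorem eigen_second_moment (M N : ℕ) (hM : 1 ≤ M) (hMN : M ≤ N) :
    ∫ x in Set.Ioi (0 : ℝ), x ^ 2 * eigenDensity M (N - M) x = N * (N + M) := by
  obtain ⟨ν, rfl⟩ := Nat.exists_eq_add_of_le hMN
  have hM0 : (M : ℝ) ≠ 0 := by positivity
  have hdensity (x : ℝ) : x ^ 2 * eigenDensity M ν x = (1 / M) * ∑ m ∈ range M,
      ((m ! : ℝ) / (m + ν)!) * (x ^ (ν + 2) * assocLaguerre m ν x ^ 2 * exp (-x)) := by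
    rw [eigenDensity, mul_left_comm, mul_sum]
    congr 1
    refine sum_congr rfl fun m _ => ?_
    ring
  simp only [Nat.add_sub_cancel_left, hdensity]
  rw [integral_const_mul, integral_finsetSum _ fun m _ =>
    (integrableOn_pow_mul_sq_assocLaguerre_mul_exp_neg m ν (ν + 2)).const_mul _]
  have hcancel (m : ℕ) (q : ℝ) : (m ! : ℝ) / (m + ν)! * ((m + ν)! / m ! * q) = q := by
    field_simp
  simp only [integral_const_mul, integral_pow_mul_sq_assocLaguerre_mul_exp_neg, hcancel]
  rw [sum_range_six_mul_sq_add]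
  push_cast
  field_simp
  ring
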